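/- arXiv:2112.13487 — 4 statements merged into one kernel-verified Lean document; each statement's English description precedes it below -/
import Mathlib

section
/- Let Π be a set and F a class of functions Π → [0,1]. Let Z be a finite set, μ a probability distribution on Z, and for each z ∈ Z let f_z ∈ F and let π_z ∈ Π be a maximizer of f_z over Π (assumed to exist). Let ρ_μ denote the law of π_z when z ∼ μ (the posterior-sampling distribution), and let f̄ : Π → [0,1] be arbitrary. Then for every γ ≥ e: E_{z∼μ} E_{π∼ρ_μ}[ f_z(π_z) − f_z(π) − γ·(f_z(π) − f̄(π))² ] ≤ inf_{Δ>0} { 2Δ + 12·θ({ f − f̄ : f ∈ F }, Δ, γ^{−1}; ρ_μ)·(log γ)²/γ } + (2γ)^{−1}, where z ∼ μ and π ∼ ρ_μ are independent. -/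
open scoped Classical

/-- The scale-sensitive disagreement coefficient
`θ(G, Δ₀, ε₀; ρ)` where `ρ` is the law of `π z` for `z` drawn from the finitely
supported distribution `μ` on `Z`:
`max(1, sup{ (Δ²/ε²)·ρ({x : ∃ g ∈ G, |g x| > Δ ∧ E_{x'∼ρ}[g(x')²] ≤ ε²}) : Δ ≥ Δ₀, ε ≥ ε₀ })`. -/
noncomputable def disagreementCoef {X Z : Type*} [Fintype Z] (G : Set (X → ℝ))
    (Δ₀ ε₀ : ℝ) (μ : Z → ℝ) (π : Z → X) : ℝ :=
  max 1 (sSup {t : ℝ | ∃ Δ ε : ℝ, Δ₀ ≤ Δ ∧ ε₀ ≤ ε ∧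
    t = Δ ^ 2 / ε ^ 2 *
      ∑ z, if ∃ g ∈ G, Δ < |g (π z)| ∧ (∑ z', μ z' * g (π z') ^ 2) ≤ ε ^ 2
        then μ z else 0})

/-! Writing `g_z = f_z - f̄`, AM-GM (`-t - γt² ≤ -(γ/2)t² + 1/(2γ)`) and the fact that
`f̄(π_z) - f̄(π)` averages to zero reduce the claim to bounding `E_z[g_z(π_z) - (γ/2) E_ρ[g_z²]]`.
Beyond the floor `a = 2Δ + e/γ`, a model `z` contributes only if `a < g_z(π_z) ≤ 1` and
`E_ρ[g_z²] ≤ 2 g_z(π_z)/γ`. Sorting such `z` into dyadic shells `D < g_z(π_z) ≤ 2D`, the decisions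
`π_z` of one shell lie in the disagreement region of `{f - f̄ : f ∈ F}` at scale `D` and radius
`ε² = 4D/γ`, so the shell contributes at most `2D · θ ε²/D² = 8θ/γ`. There are
`⌈log₂(γ/e)⌉` shells, and `e + 8⌈log₂(γ/e)⌉ ≤ 12 log² γ`. -/

open Finset

namespace PosteriorSampling

lemma le_add_sum_dyadic {a v : ℝ} (ha : 0 ≤ a) {N : ℕ} (hv : v ≤ 2 ^ N * a) :
    v ≤ a + ∑ k ∈ range N, if 2 ^ k * a < v ∧ v ≤ 2 * (2 ^ k * a) then v else 0 := by
  have hterm : ∀ k : ℕ, 0 ≤ if 2 ^ k * a < v ∧ v ≤ 2 * (2 ^ k * a) then v else 0 := fun k => by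
    split_ifs with h
    · exact (by positivity : (0 : ℝ) ≤ 2 ^ k * a).trans h.1.le
    · exact le_rfl
  induction N with
  | zero => simpa using hv
  | succ N ih =>
    rw [sum_range_succ]
    by_cases hvN : v ≤ 2 ^ N * a
    · linarith [ih hvN, hterm N]
    · rw [if_pos ⟨not_le.mp hvN, by rwa [← mul_assoc, ← pow_succ']⟩]
      linarith [sum_nonneg fun k (_ : k ∈ range N) => hterm k]

lemma sub_le_add_sum_dyadic {a v s : ℝ} (ha : 0 ≤ a) (hs : 0 ≤ s) {N : ℕ} (hv : v ≤ 2 ^ N * a) :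
    v - s ≤ a + ∑ k ∈ range N,
      if s ≤ v ∧ 2 ^ k * a < v ∧ v ≤ 2 * (2 ^ k * a) then v else 0 := by
  by_cases hsv : s ≤ v
  · simp only [hsv, true_and]
    linarith [le_add_sum_dyadic ha hv]
  · simp only [hsv, false_and, if_false, sum_const_zero]
    linarith

lemma le_pow_natCeil_logb {b x : ℝ} (hb : 1 < b) (hx : 0 < x) : x ≤ b ^ ⌈Real.logb b x⌉₊ :=
  calc x = b ^ Real.logb b x := (Real.rpow_logb (by linarith) hb.ne' hx).symm
    _ ≤ b ^ (⌈Real.logb b x⌉₊ : ℝ) := Real.rpow_le_rpow_of_exponent_le hb.le (Nat.le_ceil _)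
    _ = b ^ ⌈Real.logb b x⌉₊ := Real.rpow_natCast b _

lemma exp_one_add_eight_mul_natCeil_logb_le {γ : ℝ} (hγ : Real.exp 1 ≤ γ) :
    Real.exp 1 + 8 * ⌈Real.logb 2 (γ / Real.exp 1)⌉₊ ≤ 12 * Real.log γ ^ 2 := by
  have hγ0 : 0 < γ := (Real.exp_pos 1).trans_le hγ
  have hL : 1 ≤ Real.log γ := by
    simpa using Real.log_le_log (Real.exp_pos 1) hγ
  have hlogb : Real.logb 2 (γ / Real.exp 1) = (Real.log γ - 1) / Real.log 2 := by
    rw [Real.logb, Real.log_div hγ0.ne' (Real.exp_ne_zero 1), Real.log_exp]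
  have hN : (⌈Real.logb 2 (γ / Real.exp 1)⌉₊ : ℝ) < (Real.log γ - 1) / Real.log 2 + 1 := by
    rw [← hlogb]
    refine Nat.ceil_lt_add_one (Real.logb_nonneg one_lt_two ?_)
    rwa [le_div_iff₀ (Real.exp_pos 1), one_mul]
  have hdiv : (Real.log γ - 1) / Real.log 2 ≤ 3 / 2 * (Real.log γ - 1) := by
    rw [div_le_iff₀ (Real.log_pos one_lt_two)]
    nlinarith [Real.log_two_gt_d9]
  nlinarith [Real.exp_one_lt_d9]

variable {X Z : Type*} [Fintype Z] {G : Set (X → ℝ)} {μ : Z → ℝ} {π : Z → X}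

noncomputable def meanSq (μ : Z → ℝ) (π : Z → X) (g : X → ℝ) : ℝ :=
  ∑ z, μ z * g (π z) ^ 2

noncomputable def disagreementMass (G : Set (X → ℝ)) (Δ ε : ℝ) (μ : Z → ℝ) (π : Z → X) : ℝ :=
  ∑ z, if ∃ g ∈ G, Δ < |g (π z)| ∧ meanSq μ π g ≤ ε ^ 2 then μ z else 0

lemma meanSq_nonneg (hμ : ∀ z, 0 ≤ μ z) (g : X → ℝ) : 0 ≤ meanSq μ π g :=
  sum_nonneg fun z _ => mul_nonneg (hμ z) (sq_nonneg _)

lemma disagreementCoef_eq (G : Set (X → ℝ)) (Δ₀ ε₀ : ℝ) (μ : Z → ℝ) (π : Z → X) :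
    disagreementCoef G Δ₀ ε₀ μ π = max 1 (sSup {t : ℝ | ∃ Δ ε : ℝ, Δ₀ ≤ Δ ∧ ε₀ ≤ ε ∧
      t = Δ ^ 2 / ε ^ 2 * disagreementMass G Δ ε μ π}) :=
  rfl

/-- This bounds the set whose `sSup` defines `disagreementCoef`, so that the `sSup` is not junk.
Each `z` counted carries `μ z ≤ ε² / Δ²`, since its witness `g` has
`μ z Δ² ≤ μ z g(π z)² ≤ E_ρ[g²] ≤ ε²`. -/
lemma mul_disagreementMass_le_card (hμ : ∀ z, 0 ≤ μ z) {Δ : ℝ} (hΔ : 0 ≤ Δ) (ε : ℝ) :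
    Δ ^ 2 / ε ^ 2 * disagreementMass G Δ ε μ π ≤ Fintype.card Z := by
  rw [disagreementMass, mul_sum]
  calc ∑ z, Δ ^ 2 / ε ^ 2 * (if ∃ g ∈ G, Δ < |g (π z)| ∧ meanSq μ π g ≤ ε ^ 2 then μ z else 0)
      ≤ ∑ _z : Z, (1 : ℝ) := by
        refine sum_le_sum fun z _ => ?_
        split_ifs with h
        · obtain ⟨g, -, hlt, hsq⟩ := h
          have hΔg : Δ ^ 2 ≤ g (π z) ^ 2 := by
            rw [← sq_abs (g (π z))]
            exact pow_le_pow_left₀ hΔ hlt.le 2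
          have hterm : μ z * g (π z) ^ 2 ≤ meanSq μ π g :=
            single_le_sum (f := fun z => μ z * g (π z) ^ 2)
              (fun z _ => mul_nonneg (hμ z) (sq_nonneg _)) (mem_univ z)
          rw [div_mul_eq_mul_div, mul_comm]
          exact div_le_one_of_le₀ (by nlinarith [hμ z]) (sq_nonneg ε)
        · simp
    _ = Fintype.card Z := by simp

lemma mul_disagreementMass_le_disagreementCoef (hμ : ∀ z, 0 ≤ μ z) {Δ₀ ε₀ Δ ε : ℝ}
    (hΔ₀ : 0 ≤ Δ₀) (hΔ : Δ₀ ≤ Δ) (hε : ε₀ ≤ ε) :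
    Δ ^ 2 / ε ^ 2 * disagreementMass G Δ ε μ π ≤ disagreementCoef G Δ₀ ε₀ μ π := by
  have hbdd : BddAbove {t : ℝ | ∃ Δ ε : ℝ, Δ₀ ≤ Δ ∧ ε₀ ≤ ε ∧
      t = Δ ^ 2 / ε ^ 2 * disagreementMass G Δ ε μ π} := by
    refine ⟨Fintype.card Z, ?_⟩
    rintro t ⟨Δ, ε, hΔ, -, rfl⟩
    exact mul_disagreementMass_le_card hμ (hΔ₀.trans hΔ) ε
  rw [disagreementCoef_eq]
  exact le_max_of_le_right (le_csSup hbdd ⟨Δ, ε, hΔ, hε, rfl⟩)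

lemma disagreementMass_le (hμ : ∀ z, 0 ≤ μ z) {Δ₀ ε₀ Δ ε : ℝ}
    (hΔ₀ : 0 ≤ Δ₀) (hΔ : Δ₀ ≤ Δ) (hΔ0 : 0 < Δ) (hε : ε₀ ≤ ε) (hε0 : 0 < ε) :
    disagreementMass G Δ ε μ π ≤ disagreementCoef G Δ₀ ε₀ μ π * ε ^ 2 / Δ ^ 2 := by
  have h := mul_disagreementMass_le_disagreementCoef (G := G) (π := π) hμ hΔ₀ hΔ hε
  rw [le_div_iff₀ (by positivity)]
  rw [div_mul_eq_mul_div, div_le_iff₀ (by positivity)] at h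
  linarith

lemma sum_sum_mul_mul_sub_eq_zero (μ c : Z → ℝ) :
    ∑ z, ∑ z', μ z * μ z' * (c z - c z') = 0 := by
  simp only [mul_sub, sum_sub_distrib]
  rw [sub_eq_zero, sum_comm]
  exact sum_congr rfl fun _ _ => sum_congr rfl fun _ _ => by ring

lemma sum_sum_regret_sub_sq_le (hμ : ∀ z, 0 ≤ μ z) (hμ1 : ∑ z, μ z = 1)
    (r : Z → X → ℝ) (π : Z → X) (c : X → ℝ) {γ : ℝ} (hγ : 0 < γ) :
    ∑ z, ∑ z', μ z * μ z' * (r z (π z) - r z (π z') - γ * (r z (π z') - c (π z')) ^ 2) ≤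
      ∑ z, μ z * ((r z - c) (π z) - γ / 2 * meanSq μ π (r z - c)) + (2 * γ)⁻¹ := by
  have hpt : ∀ z z', r z (π z) - r z (π z') - γ * (r z (π z') - c (π z')) ^ 2 ≤
      ((r z - c) (π z) - γ / 2 * (r z - c) (π z') ^ 2) + (c (π z) - c (π z')) + (2 * γ)⁻¹ := by
    intro z z'
    have hsq : 0 ≤ γ / 2 * (r z (π z') - c (π z') + γ⁻¹) ^ 2 := by positivity
    have hexp : γ / 2 * (r z (π z') - c (π z') + γ⁻¹) ^ 2 = γ / 2 * (r z (π z') - c (π z')) ^ 2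
        + (r z (π z') - c (π z')) + (2 * γ)⁻¹ := by
      field_simp
      ring
    simp only [Pi.sub_apply]
    linarith
  calc _ ≤ ∑ z, ∑ z', μ z * μ z' * (((r z - c) (π z) - γ / 2 * (r z - c) (π z') ^ 2)
        + (c (π z) - c (π z')) + (2 * γ)⁻¹) := by
        gcongr with z _ z' _
        · exact mul_nonneg (hμ z) (hμ z')
        · exact hpt z z'
    _ = _ := by
        simp only [mul_add, sum_add_distrib, sum_sum_mul_mul_sub_eq_zero μ (fun z => c (π z)),
          add_zero, ← sum_mul, ← mul_sum, hμ1, mul_one, one_mul]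
        congr 1
        refine sum_congr rfl fun z _ => ?_
        calc _ = μ z * ((r z - c) (π z) * ∑ z', μ z' - γ / 2 * meanSq μ π (r z - c)) := by
              rw [meanSq, mul_sum, mul_sum, ← sum_sub_distrib, mul_sum]
              exact sum_congr rfl fun _ _ => by ring
          _ = _ := by rw [hμ1, mul_one]

lemma sum_shell_le (hμ : ∀ z, 0 ≤ μ z) {g : Z → X → ℝ} (hg : ∀ z, g z ∈ G)
    {γ Δ D : ℝ} (hγ : 0 < γ) (hΔ : 0 ≤ Δ) (hΔD : Δ ≤ D) (hDγ : 1 ≤ 4 * D * γ) :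
    ∑ z, μ z * (if γ / 2 * meanSq μ π (g z) ≤ g z (π z) ∧ D < g z (π z) ∧ g z (π z) ≤ 2 * D
      then g z (π z) else 0) ≤ 8 * disagreementCoef G Δ γ⁻¹ μ π / γ := by
  have hD : 0 < D := by nlinarith
  set ε := √(4 * D / γ)
  have hε2 : ε ^ 2 = 4 * D / γ := Real.sq_sqrt (by positivity)
  have hε0 : 0 < ε := Real.sqrt_pos.mpr (by positivity)
  have hγε : γ⁻¹ ≤ ε := by
    rw [Real.le_sqrt (by positivity) (by positivity), le_div_iff₀ hγ, sq, mul_assoc,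
      inv_mul_cancel₀ hγ.ne', mul_one, inv_le_iff_one_le_mul₀ hγ]
    exact hDγ
  have hdisagree : ∀ z, γ / 2 * meanSq μ π (g z) ≤ g z (π z) → D < g z (π z) →
      g z (π z) ≤ 2 * D → ∃ g' ∈ G, D < |g' (π z)| ∧ meanSq μ π g' ≤ ε ^ 2 := by
    intro z hsq hlt hle
    refine ⟨g z, hg z, hlt.trans_le (le_abs_self _), ?_⟩
    rw [hε2, le_div_iff₀ hγ]
    linarith
  calc _ ≤ ∑ z, 2 * D * (if ∃ g' ∈ G, D < |g' (π z)| ∧ meanSq μ π g' ≤ ε ^ 2 then μ z else 0) := by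
        refine sum_le_sum fun z _ => ?_
        split_ifs with hB hB'
        · nlinarith [hμ z]
        · exact absurd (hdisagree z hB.1 hB.2.1 hB.2.2) hB'
        · simpa using mul_nonneg (by positivity : (0 : ℝ) ≤ 2 * D) (hμ z)
        · simp
    _ = 2 * D * disagreementMass G D ε μ π := by rw [disagreementMass, mul_sum]
    _ ≤ 2 * D * (disagreementCoef G Δ γ⁻¹ μ π * ε ^ 2 / D ^ 2) := by
        gcongr
        exact disagreementMass_le hμ hΔ hΔD hD hγε hε0
    _ = 8 * disagreementCoef G Δ γ⁻¹ μ π / γ := by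
        rw [hε2]
        field_simp
        ring

lemma sum_sub_meanSq_le_disagreementCoef (hμ : ∀ z, 0 ≤ μ z) (hμ1 : ∑ z, μ z = 1)
    {g : Z → X → ℝ} (hg : ∀ z, g z ∈ G) (hg1 : ∀ z, g z (π z) ≤ 1)
    {γ Δ : ℝ} (hγ : Real.exp 1 ≤ γ) (hΔ : 0 < Δ) :
    ∑ z, μ z * (g z (π z) - γ / 2 * meanSq μ π (g z)) ≤
      2 * Δ + 12 * disagreementCoef G Δ γ⁻¹ μ π * Real.log γ ^ 2 / γ := by
  have hγ0 : 0 < γ := (Real.exp_pos 1).trans_le hγ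
  set θ := disagreementCoef G Δ γ⁻¹ μ π
  set a := 2 * Δ + Real.exp 1 / γ
  set N := ⌈Real.logb 2 (γ / Real.exp 1)⌉₊
  have hea : Real.exp 1 / γ ≤ a := le_add_of_nonneg_left (by positivity)
  have hΔa : 2 * Δ ≤ a := le_add_of_nonneg_right (by positivity)
  have haγ : Real.exp 1 ≤ a * γ := (div_le_iff₀ hγ0).mp hea
  have ha : 0 ≤ a := (by positivity : 0 ≤ Real.exp 1 / γ).trans hea
  have hNa : 1 ≤ 2 ^ N * a :=
    calc 1 = γ / Real.exp 1 * (Real.exp 1 / γ) := by field_simp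
      _ ≤ 2 ^ N * a := mul_le_mul (le_pow_natCeil_logb one_lt_two (by positivity)) hea
          (by positivity) (by positivity)
  have hshell : ∀ k : ℕ, ∑ z, μ z * (if γ / 2 * meanSq μ π (g z) ≤ g z (π z) ∧
      2 ^ k * a < g z (π z) ∧ g z (π z) ≤ 2 * (2 ^ k * a) then g z (π z) else 0) ≤ 8 * θ / γ := by
    intro k
    have hak : a ≤ 2 ^ k * a := le_mul_of_one_le_left ha (one_le_pow₀ one_le_two)
    refine sum_shell_le hμ hg hγ0 hΔ.le (by linarith) ?_
    nlinarith [Real.add_one_le_exp 1, mul_le_mul_of_nonneg_right hak hγ0.le]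
  have hθ : 1 ≤ θ := le_max_left _ _
  have hN := exp_one_add_eight_mul_natCeil_logb_le hγ
  calc _ ≤ ∑ z, μ z * (a + ∑ k ∈ range N, if γ / 2 * meanSq μ π (g z) ≤ g z (π z) ∧
        2 ^ k * a < g z (π z) ∧ g z (π z) ≤ 2 * (2 ^ k * a) then g z (π z) else 0) :=
        sum_le_sum fun z _ => mul_le_mul_of_nonneg_left
          (sub_le_add_sum_dyadic ha (mul_nonneg (by positivity) (meanSq_nonneg hμ (g z)))
            ((hg1 z).trans hNa)) (hμ z)
    _ = a + ∑ k ∈ range N, ∑ z, μ z * (if γ / 2 * meanSq μ π (g z) ≤ g z (π z) ∧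
        2 ^ k * a < g z (π z) ∧ g z (π z) ≤ 2 * (2 ^ k * a) then g z (π z) else 0) := by
        simp only [mul_add, sum_add_distrib, ← sum_mul, hμ1, one_mul, mul_sum]
        rw [sum_comm]
    _ ≤ a + ∑ _k ∈ range N, 8 * θ / γ := by gcongr with k; exact hshell k
    _ = 2 * Δ + (Real.exp 1 + 8 * N * θ) / γ := by
        simp only [sum_const, card_range, nsmul_eq_mul]
        ring
    _ ≤ 2 * Δ + 12 * θ * Real.log γ ^ 2 / γ := by
        gcongr
        nlinarith [Real.exp_pos 1]

end PosteriorSampling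

open PosteriorSampling in
theorem posterior_sampling_disagreement_bound_general {X Z : Type*} [Fintype Z]
    (F : Set (X → ℝ)) (hF_mem : ∀ f ∈ F, ∀ x, f x ∈ Set.Icc (0 : ℝ) 1)
    (μ : Z → ℝ) (hμ_nonneg : ∀ z, 0 ≤ μ z) (hμ_sum : (∑ z, μ z) = 1)
    (f : Z → X → ℝ) (hf_mem : ∀ z, f z ∈ F) (π : Z → X)
    (fbar : X → ℝ) (hfbar_mem : ∀ x, fbar x ∈ Set.Icc (0 : ℝ) 1)
    (γ : ℝ) (hγ : Real.exp 1 ≤ γ) :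
    (∑ z, ∑ z', μ z * μ z' *
        (f z (π z) - f z (π z') - γ * (f z (π z') - fbar (π z')) ^ 2)) ≤
      (⨅ Δ : {Δ : ℝ // 0 < Δ},
        (2 * Δ.1 + 12 * disagreementCoef ((fun g => g - fbar) '' F) Δ.1 γ⁻¹ μ π *
          Real.log γ ^ 2 / γ)) + (2 * γ)⁻¹ := by
  have hgap_le_one : ∀ z, (f z - fbar) (π z) ≤ 1 := fun z => by
    have := (hF_mem _ (hf_mem z) (π z)).2
    have := (hfbar_mem (π z)).1
    simp only [Pi.sub_apply]
    linarith
  have : Nonempty {Δ : ℝ // 0 < Δ} := ⟨⟨1, one_pos⟩⟩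
  calc _ ≤ ∑ z, μ z * ((f z - fbar) (π z) - γ / 2 * meanSq μ π (f z - fbar)) + (2 * γ)⁻¹ :=
        sum_sum_regret_sub_sq_le hμ_nonneg hμ_sum f π fbar ((Real.exp_pos 1).trans_le hγ)
    _ ≤ _ := by
        gcongr
        exact le_ciInf fun Δ => sum_sub_meanSq_le_disagreementCoef (G := (fun g => g - fbar) '' F)
          hμ_nonneg hμ_sum (fun z => ⟨f z, hf_mem z, rfl⟩) hgap_le_one hγ Δ.2

/-- bound on the dual (Bayesian) squared-error Decision-Estimation
Coefficient via posterior sampling in terms of the disagreement coefficient.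
Here `f z` is the mean-reward function of a model drawn from the prior `μ`,
`π z` its optimal decision, `ρ_μ` (the posterior-sampling distribution) is the
law of `π z` under `z ∼ μ`, and `fbar` is an arbitrary reference mean-reward
function. -/
theorem posterior_sampling_disagreement_bound {X Z : Type*} [Fintype Z]
    (F : Set (X → ℝ)) (hF_mem : ∀ f ∈ F, ∀ x, f x ∈ Set.Icc (0 : ℝ) 1)
    (μ : Z → ℝ) (hμ_nonneg : ∀ z, 0 ≤ μ z) (hμ_sum : (∑ z, μ z) = 1)
    (f : Z → X → ℝ) (hf_mem : ∀ z, f z ∈ F) (π : Z → X)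
    (h_max : ∀ z x, f z x ≤ f z (π z))
    (fbar : X → ℝ) (hfbar_mem : ∀ x, fbar x ∈ Set.Icc (0 : ℝ) 1)
    (γ : ℝ) (hγ : Real.exp 1 ≤ γ) :
    (∑ z, ∑ z', μ z * μ z' *
        (f z (π z) - f z (π z') - γ * (f z (π z') - fbar (π z')) ^ 2)) ≤
      (⨅ Δ : {Δ : ℝ // 0 < Δ},
        (2 * Δ.1 + 12 * disagreementCoef ((fun g => g - fbar) '' F) Δ.1 γ⁻¹ μ π *
          Real.log γ ^ 2 / γ)) + (2 * γ)⁻¹ :=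
  posterior_sampling_disagreement_bound_general F hF_mem μ hμ_nonneg hμ_sum f hf_mem π fbar
    hfbar_mem γ hγ
end

section
/- Let P and Q be probability measures on a measurable space (X, 𝔉), let R > 0, and let h : X → ℝ be a measurable function with 0 ≤ h(x) ≤ R for all x. Then |E_P[h] − E_Q[h]| ≤ √( 2R·(E_P[h] + E_Q[h])·D_H²(P,Q) ), and consequently E_P[h] ≤ 3·E_Q[h] + 4R·D_H²(P,Q). -/
open MeasureTheory

/-- Squared Hellinger distance `D_H²(P,Q) = ∫ (√(dP/dν) − √(dQ/dν))² dν`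
computed with the dominating measure `ν = P + Q`. -/
noncomputable def sqHellinger {α : Type*} [MeasurableSpace α] (P Q : Measure α) : ℝ :=
  ∫ x, (Real.sqrt ((P.rnDeriv (P + Q)) x).toReal
      - Real.sqrt ((Q.rnDeriv (P + Q)) x).toReal) ^ 2 ∂(P + Q)

/-- multiplicative Pinsker-type inequality for the Hellinger
distance. -/
theorem multiplicative_pinsker {X : Type*} [MeasurableSpace X] (P Q : Measure X)
    [IsProbabilityMeasure P] [IsProbabilityMeasure Q]
    (R : ℝ) (hR : 0 < R) (h : X → ℝ) (h_meas : Measurable h)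
    (h_mem : ∀ x, h x ∈ Set.Icc 0 R) :
    |(∫ x, h x ∂P) - ∫ x, h x ∂Q| ≤
        Real.sqrt (2 * R * ((∫ x, h x ∂P) + ∫ x, h x ∂Q) * sqHellinger P Q) ∧
      (∫ x, h x ∂P) ≤ 3 * (∫ x, h x ∂Q) + 4 * R * sqHellinger P Q := by
  set ν : Measure X := P + Q with hν
  have hPν : P ≪ ν := by
    rw [hν]; exact Measure.AbsolutelyContinuous.rfl.add_right Q
  have hQν : Q ≪ ν := by
    rw [hν, add_comm]; exact Measure.AbsolutelyContinuous.rfl.add_right P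
  set f : X → ℝ := fun x => ((P.rnDeriv ν) x).toReal with hf_def
  set g : X → ℝ := fun x => ((Q.rnDeriv ν) x).toReal with hg_def
  have hf_meas : Measurable f := (Measure.measurable_rnDeriv P ν).ennreal_toReal
  have hg_meas : Measurable g := (Measure.measurable_rnDeriv Q ν).ennreal_toReal
  have hf0 : ∀ x, 0 ≤ f x := fun x => ENNReal.toReal_nonneg
  have hg0 : ∀ x, 0 ≤ g x := fun x => ENNReal.toReal_nonneg
  have hf_int : Integrable f ν := Measure.integrable_toReal_rnDeriv
  have hg_int : Integrable g ν := Measure.integrable_toReal_rnDeriv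
  have h0 : ∀ x, 0 ≤ h x := fun x => (h_mem x).1
  have hhR : ∀ x, h x ≤ R := fun x => (h_mem x).2
  have hP : ∫ x, f x * h x ∂ν = ∫ x, h x ∂P := by
    simpa [smul_eq_mul] using integral_rnDeriv_smul hPν (f := h)
  have hQ : ∫ x, g x * h x ∂ν = ∫ x, h x ∂Q := by
    simpa [smul_eq_mul] using integral_rnDeriv_smul hQν (f := h)
  set a : ℝ := ∫ x, h x ∂P with ha_def
  set b : ℝ := ∫ x, h x ∂Q with hb_def
  set D : ℝ := sqHellinger P Q with hD_def
  have ha : 0 ≤ a := integral_nonneg h0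
  have hb : 0 ≤ b := integral_nonneg h0
  have hD : 0 ≤ D := integral_nonneg fun x => sq_nonneg _
  -- u, v
  set u : X → ℝ := fun x => h x * (Real.sqrt (f x) + Real.sqrt (g x)) with hu_def
  set v : X → ℝ := fun x => Real.sqrt (f x) - Real.sqrt (g x) with hv_def
  have hu_meas : Measurable u :=
    h_meas.mul (hf_meas.sqrt.add hg_meas.sqrt)
  have hv_meas : Measurable v := hf_meas.sqrt.sub hg_meas.sqrt
  have hu0 : ∀ x, 0 ≤ u x := fun x =>
    mul_nonneg (h0 x) (add_nonneg (Real.sqrt_nonneg _) (Real.sqrt_nonneg _))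
  have hD_eq : D = ∫ x, v x ^ 2 ∂ν := rfl
  -- integrability
  have hfh_int : Integrable (fun x => f x * h x) ν := by
    refine hf_int.bdd_mul (c := R) h_meas.aestronglyMeasurable ?_ |>.congr ?_
    · exact Filter.Eventually.of_forall fun x => by
        rw [Real.norm_eq_abs, abs_of_nonneg (h0 x)]; exact hhR x
    · exact Filter.Eventually.of_forall fun x => mul_comm _ _
  have hgh_int : Integrable (fun x => g x * h x) ν := by
    refine hg_int.bdd_mul (c := R) h_meas.aestronglyMeasurable ?_ |>.congr ?_
    · exact Filter.Eventually.of_forall fun x => by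
        rw [Real.norm_eq_abs, abs_of_nonneg (h0 x)]; exact hhR x
    · exact Filter.Eventually.of_forall fun x => mul_comm _ _
  have hv2_le : ∀ x, v x ^ 2 ≤ 2 * (f x + g x) := by
    intro x
    simp only [hv_def]
    have h1 : Real.sqrt (f x) ^ 2 = f x := Real.sq_sqrt (hf0 x)
    have h2 : Real.sqrt (g x) ^ 2 = g x := Real.sq_sqrt (hg0 x)
    nlinarith [sq_nonneg (Real.sqrt (f x) + Real.sqrt (g x))]
  have hv2_int : Integrable (fun x => v x ^ 2) ν := by
    refine Integrable.mono' (((hf_int.add hg_int).const_mul 2)) 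
      (hv_meas.pow_const 2).aestronglyMeasurable ?_
    exact Filter.Eventually.of_forall fun x => by
      rw [Real.norm_eq_abs, abs_of_nonneg (sq_nonneg _)]; exact hv2_le x
  have hu2_le : ∀ x, u x ^ 2 ≤ 2 * R * (f x * h x + g x * h x) := by
    intro x
    have h1 : Real.sqrt (f x) ^ 2 = f x := Real.sq_sqrt (hf0 x)
    have h2 : Real.sqrt (g x) ^ 2 = g x := Real.sq_sqrt (hg0 x)
    have h3 : 0 ≤ Real.sqrt (f x) * Real.sqrt (g x) :=
      mul_nonneg (Real.sqrt_nonneg _) (Real.sqrt_nonneg _)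
    have h4 : h x * h x ≤ R * h x := mul_le_mul_of_nonneg_right (hhR x) (h0 x)
    have h5 : (Real.sqrt (f x) + Real.sqrt (g x)) ^ 2 ≤ 2 * (f x + g x) := by
      nlinarith [sq_nonneg (Real.sqrt (f x) - Real.sqrt (g x))]
    calc u x ^ 2 = (h x * h x) * (Real.sqrt (f x) + Real.sqrt (g x)) ^ 2 := by ring
      _ ≤ (R * h x) * (2 * (f x + g x)) := by
          apply mul_le_mul h4 h5 (sq_nonneg _) (mul_nonneg hR.le (h0 x))
      _ = 2 * R * (f x * h x + g x * h x) := by ring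
  have hu2_int : Integrable (fun x => u x ^ 2) ν := by
    refine Integrable.mono' (((hfh_int.add hgh_int).const_mul (2 * R)))
      (hu_meas.pow_const 2).aestronglyMeasurable ?_
    exact Filter.Eventually.of_forall fun x => by
      rw [Real.norm_eq_abs, abs_of_nonneg (sq_nonneg _)]; exact hu2_le x
  have hu2_integral : ∫ x, u x ^ 2 ∂ν ≤ 2 * R * (a + b) := by
    calc ∫ x, u x ^ 2 ∂ν ≤ ∫ x, 2 * R * (f x * h x + g x * h x) ∂ν :=
          integral_mono hu2_int ((hfh_int.add hgh_int).const_mul (2 * R)) hu2_le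
      _ = 2 * R * (a + b) := by
          rw [integral_const_mul, integral_add hfh_int hgh_int, hP, hQ]
  have huv_int : Integrable (fun x => u x * v x) ν := by
    refine Integrable.mono' ((hu2_int.add hv2_int).const_mul (1/2 : ℝ))
      (hu_meas.mul hv_meas).aestronglyMeasurable ?_
    exact Filter.Eventually.of_forall fun x => by
      rw [Real.norm_eq_abs, abs_mul]
      simp only [Pi.add_apply]
      show |u x| * |v x| ≤ 1/2 * (u x ^ 2 + v x ^ 2)
      clear_value u v
      have hsq := sq_nonneg (|u x| - |v x|)
      rw [sub_sq, sq_abs, sq_abs] at hsq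
      nlinarith [hsq]

  -- difference as integral of u * v
  have hdiff : a - b = ∫ x, u x * v x ∂ν := by
    rw [← hP, ← hQ, ← integral_sub hfh_int hgh_int]
    refine integral_congr_ae (Filter.Eventually.of_forall fun x => ?_)
    have h1 : Real.sqrt (f x) ^ 2 = f x := Real.sq_sqrt (hf0 x)
    have h2 : Real.sqrt (g x) ^ 2 = g x := Real.sq_sqrt (hg0 x)
    simp only [hu_def, hv_def]
    linear_combination (-(h x)) * h1 + h x * h2
  -- Cauchy-Schwarz
  have hCS : |∫ x, u x * v x ∂ν| ≤
      Real.sqrt (∫ x, u x ^ 2 ∂ν) * Real.sqrt (∫ x, v x ^ 2 ∂ν) := by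
    have habs : |∫ x, u x * v x ∂ν| ≤ ∫ x, u x * |v x| ∂ν := by
      rw [← Real.norm_eq_abs]
      refine (norm_integral_le_integral_norm _).trans_eq ?_
      refine integral_congr_ae (Filter.Eventually.of_forall fun x => ?_)
      simp only [Real.norm_eq_abs, abs_mul, abs_of_nonneg (hu0 x)]
    have hconj : Real.HolderConjugate 2 2 := Real.HolderConjugate.two_two
    have humem : MemLp u (ENNReal.ofReal 2) ν := by
      rw [show ENNReal.ofReal 2 = 2 by norm_num]
      exact (memLp_two_iff_integrable_sq hu_meas.aestronglyMeasurable).2 hu2_int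
    have hvmem : MemLp (fun x => |v x|) (ENNReal.ofReal 2) ν := by
      rw [show ENNReal.ofReal 2 = 2 by norm_num]
      refine (memLp_two_iff_integrable_sq hv_meas.abs.aestronglyMeasurable).2 ?_
      exact hv2_int.congr (Filter.Eventually.of_forall fun x => (sq_abs (v x)).symm)
    have := integral_mul_le_Lp_mul_Lq_of_nonneg hconj
      (Filter.Eventually.of_forall hu0)
      (Filter.Eventually.of_forall fun x => abs_nonneg (v x)) humem hvmem
    have heq1 : ∫ x, u x ^ (2:ℝ) ∂ν = ∫ x, u x ^ 2 ∂ν := by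
      refine integral_congr_ae (Filter.Eventually.of_forall fun x => ?_)
      exact Real.rpow_two (u x)
    have heq2 : ∫ x, |v x| ^ (2:ℝ) ∂ν = ∫ x, v x ^ 2 ∂ν := by
      refine integral_congr_ae (Filter.Eventually.of_forall fun x => ?_)
      show |v x| ^ (2:ℝ) = v x ^ 2
      rw [Real.rpow_two, sq_abs]
    rw [heq1, heq2] at this
    refine habs.trans (this.trans_eq ?_)
    rw [Real.sqrt_eq_rpow, Real.sqrt_eq_rpow]
  have key : |a - b| ≤ Real.sqrt (2 * R * (a + b) * D) := by
    rw [hdiff]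
    refine hCS.trans ?_
    rw [hD_eq]
    calc Real.sqrt (∫ x, u x ^ 2 ∂ν) * Real.sqrt (∫ x, v x ^ 2 ∂ν)
        ≤ Real.sqrt (2 * R * (a + b)) * Real.sqrt (∫ x, v x ^ 2 ∂ν) := by
          apply mul_le_mul_of_nonneg_right (Real.sqrt_le_sqrt hu2_integral)
            (Real.sqrt_nonneg _)
      _ = Real.sqrt (2 * R * (a + b) * ∫ x, v x ^ 2 ∂ν) :=
          (Real.sqrt_mul (by positivity) _).symm
  refine ⟨key, ?_⟩
  -- second part
  set t : ℝ := Real.sqrt (2 * R * (a + b) * D) with ht_def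
  have ht0 : 0 ≤ t := Real.sqrt_nonneg _
  have ht2 : t ^ 2 = 2 * R * (a + b) * D := Real.sq_sqrt (by positivity)
  have hab : a - b ≤ t := (le_abs_self _).trans key
  nlinarith [sq_nonneg ((a+b)/4 + 2*R*D - t), sq_nonneg ((a+b)/4 - 2*R*D),
    mul_nonneg hR.le hD, mul_nonneg (mul_nonneg hR.le hD) hb]
end

section
/- Let P and Q be probability measures on a measurable space (Ω, 𝔉), let ε > 0, and let X, Y : Ω → [0,∞) be measurable functions, integrable under both P and Q, such that |X − Y| ≤ ε holds P-almost surely and Q-almost surely. Then |E_P[X − Y] − E_Q[X − Y]| ≤ √( 8ε·( E_P[X + Y] + E_Q[X + Y] )·D_H²(P,Q) ). -/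
/-!
Let `f`, `g` be the densities of `P`, `Q` with respect to `P + Q`. For square-integrable `Z`,
`E_P Z - E_Q Z = ∫ Z (√f + √g) (√f - √g) d(P + Q)`, so Cauchy–Schwarz bounds it by
`√(∫ Z² (√f + √g)² d(P + Q)) · √(D_H²(P, Q))`, and `(√f + √g)² ≤ 2 (f + g)` turns the first factor
into `√(2 (E_P Z² + E_Q Z²))`. For `Z = X - Y` with `X, Y ≥ 0` and `|Z| ≤ ε` we have
`Z² ≤ ε |Z| ≤ ε (X + Y)`, which gives the claim even with the constant `2` in place of `8`.
-/

open MeasureTheory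

section

variable {α : Type*} [MeasurableSpace α]

theorem abs_integral_mul_le_sqrt_integral_sq_mul_sqrt_integral_sq {μ : Measure α} {u v : α → ℝ}
    (hu : MemLp u 2 μ) (hv : MemLp v 2 μ) :
    |∫ x, u x * v x ∂μ| ≤ √(∫ x, u x ^ 2 ∂μ) * √(∫ x, v x ^ 2 ∂μ) := by
  have h2 : ENNReal.ofReal 2 = 2 := by norm_num
  calc |∫ x, u x * v x ∂μ| ≤ ∫ x, ‖u x‖ * ‖v x‖ ∂μ := by
        simpa only [Real.norm_eq_abs, abs_mul] using
          abs_integral_le_integral_abs (f := fun x ↦ u x * v x) (μ := μ)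
    _ ≤ (∫ x, ‖u x‖ ^ (2 : ℝ) ∂μ) ^ (1 / (2 : ℝ)) * (∫ x, ‖v x‖ ^ (2 : ℝ) ∂μ) ^ (1 / (2 : ℝ)) :=
        integral_mul_norm_le_Lp_mul_Lq Real.HolderConjugate.two_two (h2 ▸ hu) (h2 ▸ hv)
    _ = √(∫ x, u x ^ 2 ∂μ) * √(∫ x, v x ^ 2 ∂μ) := by
        simp only [Real.rpow_two, Real.norm_eq_abs, sq_abs, Real.sqrt_eq_rpow]

section RadonNikodym

variable {μ ν : Measure α} [SigmaFinite μ] [μ.HaveLebesgueDecomposition ν]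

theorem integral_mul_sqrt_rnDeriv_sq (hμν : μ ≪ ν) (Z : α → ℝ) :
    ∫ x, (Z x * √(μ.rnDeriv ν x).toReal) ^ 2 ∂ν = ∫ x, Z x ^ 2 ∂μ := by
  simp_rw [mul_pow, Real.sq_sqrt ENNReal.toReal_nonneg, mul_comm (Z _ ^ 2)]
  exact integral_toReal_rnDeriv_mul hμν

theorem memLp_two_mul_sqrt_rnDeriv (hμν : μ ≪ ν) {Z : α → ℝ} (hZν : AEStronglyMeasurable Z ν)
    (hZ : MemLp Z 2 μ) : MemLp (fun x ↦ Z x * √(μ.rnDeriv ν x).toReal) 2 ν := by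
  refine (memLp_two_iff_integrable_sq
    (hZν.mul (μ.measurable_rnDeriv ν).ennreal_toReal.sqrt.aestronglyMeasurable)).2 ?_
  show Integrable (fun x ↦ (Z x * √(μ.rnDeriv ν x).toReal) ^ 2) ν
  simp_rw [mul_pow, Real.sq_sqrt ENNReal.toReal_nonneg, mul_comm (Z _ ^ 2)]
  exact (integrable_toReal_rnDeriv_mul_iff hμν).2 hZ.integrable_sq

theorem memLp_two_sqrt_rnDeriv [IsFiniteMeasure μ] (hμν : μ ≪ ν) :
    MemLp (fun x ↦ √(μ.rnDeriv ν x).toReal) 2 ν := by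
  simpa only [one_mul] using
    memLp_two_mul_sqrt_rnDeriv hμν aestronglyMeasurable_const (memLp_const (1 : ℝ))

end RadonNikodym

theorem sqHellinger_nonneg (P Q : Measure α) : 0 ≤ sqHellinger P Q :=
  integral_nonneg fun _ ↦ sq_nonneg _

theorem abs_integral_sub_integral_le_sqrt_sqHellinger {P Q : Measure α} [IsFiniteMeasure P]
    [IsFiniteMeasure Q] {Z : α → ℝ} (hZP : MemLp Z 2 P) (hZQ : MemLp Z 2 Q) :
    |∫ x, Z x ∂P - ∫ x, Z x ∂Q| ≤
      √(2 * (∫ x, Z x ^ 2 ∂P + ∫ x, Z x ^ 2 ∂Q) * sqHellinger P Q) := by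
  have hP : P ≪ P + Q := (Measure.le_add_right le_rfl).absolutelyContinuous
  have hQ : Q ≪ P + Q := (Measure.le_add_left le_rfl).absolutelyContinuous
  set a := fun x ↦ √(P.rnDeriv (P + Q) x).toReal
  set b := fun x ↦ √(Q.rnDeriv (P + Q) x).toReal
  have hZ : AEStronglyMeasurable Z (P + Q) := hZP.1.add_measure hZQ.1
  have hdiff : ∫ x, Z x ∂P - ∫ x, Z x ∂Q =
      ∫ x, (Z x * a x + Z x * b x) * (a x - b x) ∂(P + Q) := by
    rw [← integral_toReal_rnDeriv_mul hP, ← integral_toReal_rnDeriv_mul hQ,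
      ← integral_sub ((integrable_toReal_rnDeriv_mul_iff hP).2 (hZP.integrable one_le_two))
        ((integrable_toReal_rnDeriv_mul_iff hQ).2 (hZQ.integrable one_le_two))]
    congr 1 with x
    rw [← Real.sq_sqrt (@ENNReal.toReal_nonneg (P.rnDeriv (P + Q) x)),
      ← Real.sq_sqrt (@ENNReal.toReal_nonneg (Q.rnDeriv (P + Q) x))]
    ring
  have hZa := memLp_two_mul_sqrt_rnDeriv hP hZ hZP
  have hZb := memLp_two_mul_sqrt_rnDeriv hQ hZ hZQ
  have hsq : ∫ x, (Z x * a x + Z x * b x) ^ 2 ∂(P + Q) ≤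
      2 * (∫ x, Z x ^ 2 ∂P + ∫ x, Z x ^ 2 ∂Q) := by
    rw [← integral_mul_sqrt_rnDeriv_sq hP, ← integral_mul_sqrt_rnDeriv_sq hQ,
      ← integral_add hZa.integrable_sq hZb.integrable_sq, ← integral_const_mul]
    exact integral_mono (hZa.add hZb).integrable_sq
      ((hZa.integrable_sq.add hZb.integrable_sq).const_mul 2) fun x ↦ add_sq_le
  calc |∫ x, Z x ∂P - ∫ x, Z x ∂Q|
      ≤ √(∫ x, (Z x * a x + Z x * b x) ^ 2 ∂(P + Q)) * √(sqHellinger P Q) := by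
        rw [hdiff]
        exact abs_integral_mul_le_sqrt_integral_sq_mul_sqrt_integral_sq (hZa.add hZb)
          ((memLp_two_sqrt_rnDeriv hP).sub (memLp_two_sqrt_rnDeriv hQ))
    _ ≤ √(2 * (∫ x, Z x ^ 2 ∂P + ∫ x, Z x ^ 2 ∂Q)) * √(sqHellinger P Q) := by gcongr
    _ = _ := (Real.sqrt_mul' _ (sqHellinger_nonneg P Q)).symm

theorem sq_sub_le_mul_add_of_abs_sub_le {x y ε : ℝ} (hx : 0 ≤ x) (hy : 0 ≤ y) (h : |x - y| ≤ ε) :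
    (x - y) ^ 2 ≤ ε * (x + y) := by
  have hxy : |x - y| ≤ x + y := abs_le.2 ⟨by linarith, by linarith⟩
  calc (x - y) ^ 2 = |x - y| * |x - y| := by rw [← sq, sq_abs]
    _ ≤ ε * (x + y) := mul_le_mul h hxy (abs_nonneg _) ((abs_nonneg _).trans h)

section BoundedDifference

variable {μ : Measure α} {X Y : α → ℝ} {ε : ℝ}

theorem memLp_two_sub_of_ae_abs_sub_le (hX0 : ∀ x, 0 ≤ X x) (hY0 : ∀ x, 0 ≤ Y x)
    (hX : Integrable X μ) (hY : Integrable Y μ) (h : ∀ᵐ x ∂μ, |X x - Y x| ≤ ε) :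
    MemLp (fun x ↦ X x - Y x) 2 μ := by
  refine (memLp_two_iff_integrable_sq (hX.sub hY).1).2 <|
    ((hX.add hY).const_mul ε).mono' ((hX.sub hY).1.pow 2) ?_
  filter_upwards [h] with x hx
  rw [Real.norm_of_nonneg (sq_nonneg _)]
  exact sq_sub_le_mul_add_of_abs_sub_le (hX0 x) (hY0 x) hx

theorem integral_sq_sub_le_of_ae_abs_sub_le (hX0 : ∀ x, 0 ≤ X x) (hY0 : ∀ x, 0 ≤ Y x)
    (hX : Integrable X μ) (hY : Integrable Y μ) (h : ∀ᵐ x ∂μ, |X x - Y x| ≤ ε) :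
    ∫ x, (X x - Y x) ^ 2 ∂μ ≤ ε * ∫ x, (X x + Y x) ∂μ := by
  rw [← integral_const_mul]
  refine integral_mono_ae (memLp_two_sub_of_ae_abs_sub_le hX0 hY0 hX hY h).integrable_sq
    ((hX.add hY).const_mul ε) ?_
  filter_upwards [h] with x hx
  exact sq_sub_le_mul_add_of_abs_sub_le (hX0 x) (hY0 x) hx

end BoundedDifference

end

theorem change_of_measure_bounded_difference_general {Ω : Type*} [MeasurableSpace Ω]
    (P Q : Measure Ω) [IsProbabilityMeasure P] [IsProbabilityMeasure Q]
    (ε : ℝ) (X Y : Ω → ℝ)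
    (hX_nonneg : ∀ ω, 0 ≤ X ω) (hY_nonneg : ∀ ω, 0 ≤ Y ω)
    (hX_int_P : Integrable X P) (hX_int_Q : Integrable X Q)
    (hY_int_P : Integrable Y P) (hY_int_Q : Integrable Y Q)
    (h_ae_P : ∀ᵐ ω ∂P, |X ω - Y ω| ≤ ε) (h_ae_Q : ∀ᵐ ω ∂Q, |X ω - Y ω| ≤ ε) :
    |(∫ ω, (X ω - Y ω) ∂P) - ∫ ω, (X ω - Y ω) ∂Q| ≤
      Real.sqrt (8 * ε * ((∫ ω, (X ω + Y ω) ∂P) + ∫ ω, (X ω + Y ω) ∂Q) *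
        sqHellinger P Q) := by
  have hsq : ∫ ω, (X ω - Y ω) ^ 2 ∂P + ∫ ω, (X ω - Y ω) ^ 2 ∂Q ≤
      ε * ((∫ ω, (X ω + Y ω) ∂P) + ∫ ω, (X ω + Y ω) ∂Q) := by
    rw [mul_add]
    exact add_le_add
      (integral_sq_sub_le_of_ae_abs_sub_le hX_nonneg hY_nonneg hX_int_P hY_int_P h_ae_P)
      (integral_sq_sub_le_of_ae_abs_sub_le hX_nonneg hY_nonneg hX_int_Q hY_int_Q h_ae_Q)
  have hsq_nonneg : 0 ≤ ∫ ω, (X ω - Y ω) ^ 2 ∂P + ∫ ω, (X ω - Y ω) ^ 2 ∂Q :=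
    add_nonneg (integral_nonneg fun _ ↦ sq_nonneg _) (integral_nonneg fun _ ↦ sq_nonneg _)
  have hH := sqHellinger_nonneg P Q
  calc _ ≤ √(2 * (∫ ω, (X ω - Y ω) ^ 2 ∂P + ∫ ω, (X ω - Y ω) ^ 2 ∂Q) * sqHellinger P Q) :=
        abs_integral_sub_integral_le_sqrt_sqHellinger
          (memLp_two_sub_of_ae_abs_sub_le hX_nonneg hY_nonneg hX_int_P hY_int_P h_ae_P)
          (memLp_two_sub_of_ae_abs_sub_le hX_nonneg hY_nonneg hX_int_Q hY_int_Q h_ae_Q)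
    _ ≤ _ := Real.sqrt_le_sqrt (by nlinarith)

/-- change-of-measure lemma for almost-surely-bounded differences
of nonnegative random variables. -/
theorem change_of_measure_bounded_difference {Ω : Type*} [MeasurableSpace Ω]
    (P Q : Measure Ω) [IsProbabilityMeasure P] [IsProbabilityMeasure Q]
    (ε : ℝ) (hε : 0 < ε) (X Y : Ω → ℝ) (hX_meas : Measurable X) (hY_meas : Measurable Y)
    (hX_nonneg : ∀ ω, 0 ≤ X ω) (hY_nonneg : ∀ ω, 0 ≤ Y ω)
    (hX_int_P : Integrable X P) (hX_int_Q : Integrable X Q)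
    (hY_int_P : Integrable Y P) (hY_int_Q : Integrable Y Q)
    (h_ae_P : ∀ᵐ ω ∂P, |X ω - Y ω| ≤ ε) (h_ae_Q : ∀ᵐ ω ∂Q, |X ω - Y ω| ≤ ε) :
    |(∫ ω, (X ω - Y ω) ∂P) - ∫ ω, (X ω - Y ω) ∂Q| ≤
      Real.sqrt (8 * ε * ((∫ ω, (X ω + Y ω) ∂P) + ∫ ω, (X ω + Y ω) ∂Q) *
        sqHellinger P Q) :=
  change_of_measure_bounded_difference_general P Q ε X Y hX_nonneg hY_nonneg hX_int_P hX_int_Q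
    hY_int_P hY_int_Q h_ae_P h_ae_Q
end

section
/- Let (Ω, 𝔉, ℙ) be a probability space equipped with a filtration (𝔉_t)_{t=0}^T, and let (X_t)_{t=1}^T be real-valued random variables such that X_t is 𝔉_t-measurable and e^{X_t} is integrable for each t. Then for every δ ∈ (0,1), with probability at least 1 − δ the following holds simultaneously for all 1 ≤ T' ≤ T: ∑_{t=1}^{T'} X_t ≤ ∑_{t=1}^{T'} log E[ e^{X_t} | 𝔉_{t−1} ] + log(1/δ). -/
/-!
The process `Z_k = exp (∑_{t ≤ k} (X_t - log E[e^{X_t} | 𝔉_{t-1}]))` is a nonnegative martingale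
with `Z_0 = 1`: the conditional expectations are a.e. positive, and `Z_{k+1}` is `Z_k` times the
ratio `e^{X_{k+1}} / E[e^{X_{k+1}} | 𝔉_k]` whose conditional mean is `1`. Doob's maximal
inequality (Ville's inequality on a finite horizon) bounds the probability that some `Z_k`,
`k ≤ T`, reaches `1/δ` by `δ`; off that event, taking logarithms gives the bound for all `T' ≤ T`
at once. Integrability of `Z_{k+1}` is obtained by pulling the `𝔉_k`-measurable factor out of a
Lebesgue integral of nonnegative functions, which needs no integrability.
-/

open MeasureTheory

section CondExp

open scoped ENNReal

variable {Ω : Type*} {m m0 : MeasurableSpace Ω} {μ : Measure Ω}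

theorem ae_pos_condExp_of_pos (hm : m ≤ m0) [SigmaFinite (μ.trim hm)] {Y : Ω → ℝ}
    (hY : Integrable Y μ) (hY_pos : ∀ ω, 0 < Y ω) : ∀ᵐ ω ∂μ, 0 < μ[Y | m] ω := by
  set s := {ω | μ[Y | m] ω ≤ 0}
  have hs : MeasurableSet[m] s :=
    (stronglyMeasurable_condExp (m := m) (μ := μ) (f := Y)).measurable measurableSet_Iic
  have h_int_nonpos : ∫ ω in s, Y ω ∂μ ≤ 0 := by
    rw [← setIntegral_condExp hm hY hs]
    exact setIntegral_nonpos (hm s hs) fun ω hω => hω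
  have h_null : μ s = 0 := by
    by_contra h_ne
    have h_supp : 0 < μ (Function.support Y ∩ s) := by
      rwa [Function.support_eq_univ fun ω => (hY_pos ω).ne', Set.univ_inter, pos_iff_ne_zero]
    exact h_int_nonpos.not_gt <| (setIntegral_pos_iff_support_of_nonneg_ae
      (.of_forall fun ω => (hY_pos ω).le) hY.integrableOn).2 h_supp
  simpa [ae_iff, s] using h_null

theorem lintegral_ofReal_condExp_mul (hm : m ≤ m0) [SigmaFinite (μ.trim hm)] {Y : Ω → ℝ}
    (hY : Integrable Y μ) (hY_nonneg : 0 ≤ᵐ[μ] Y) {F : Ω → ℝ≥0∞} (hF : Measurable[m] F) :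
    ∫⁻ ω, ENNReal.ofReal (μ[Y | m] ω) * F ω ∂μ = ∫⁻ ω, ENNReal.ofReal (Y ω) * F ω ∂μ := by
  have h_trim : (μ.withDensity fun ω => ENNReal.ofReal (μ[Y | m] ω)).trim hm
      = (μ.withDensity fun ω => ENNReal.ofReal (Y ω)).trim hm := by
    refine @Measure.ext _ m _ _ fun s hs => ?_
    rw [trim_measurableSet_eq hm hs, trim_measurableSet_eq hm hs, withDensity_apply _ (hm s hs),
      withDensity_apply _ (hm s hs),
      ← ofReal_integral_eq_lintegral_ofReal integrable_condExp.integrableOn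
        (ae_restrict_of_ae (condExp_nonneg hY_nonneg)),
      ← ofReal_integral_eq_lintegral_ofReal hY.integrableOn (ae_restrict_of_ae hY_nonneg),
      setIntegral_condExp hm hY hs]
  calc ∫⁻ ω, ENNReal.ofReal (μ[Y | m] ω) * F ω ∂μ
      = ∫⁻ ω, F ω ∂(μ.withDensity fun ω => ENNReal.ofReal (μ[Y | m] ω)).trim hm := by
        rw [lintegral_trim hm hF, lintegral_withDensity_eq_lintegral_mul₀
          integrable_condExp.1.aemeasurable.ennreal_ofReal (hF.mono hm le_rfl).aemeasurable]
        rfl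
    _ = ∫⁻ ω, ENNReal.ofReal (Y ω) * F ω ∂μ := by
        rw [h_trim, lintegral_trim hm hF, lintegral_withDensity_eq_lintegral_mul₀
          hY.1.aemeasurable.ennreal_ofReal (hF.mono hm le_rfl).aemeasurable]
        rfl

theorem integrable_mul_of_integrable_mul_condExp (hm : m ≤ m0) [SigmaFinite (μ.trim hm)]
    {f Y : Ω → ℝ} (hf : StronglyMeasurable[m] f) (hf_nonneg : 0 ≤ f) (hY : Integrable Y μ)
    (hY_nonneg : 0 ≤ᵐ[μ] Y) (h_int : Integrable (fun ω => f ω * μ[Y | m] ω) μ) :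
    Integrable (fun ω => f ω * Y ω) μ := by
  refine ⟨(hf.mono hm).aestronglyMeasurable.mul hY.1, ?_⟩
  have h_enorm : ∀ Z : Ω → ℝ, 0 ≤ᵐ[μ] Z →
      ∫⁻ ω, ‖f ω * Z ω‖ₑ ∂μ = ∫⁻ ω, ENNReal.ofReal (Z ω) * ENNReal.ofReal (f ω) ∂μ := by
    intro Z hZ
    refine lintegral_congr_ae ?_
    filter_upwards [hZ] with ω hω
    rw [← ENNReal.ofReal_mul hω, mul_comm (Z ω),
      Real.enorm_of_nonneg (mul_nonneg (hf_nonneg ω) hω)]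
  rw [HasFiniteIntegral, h_enorm Y hY_nonneg,
    ← lintegral_ofReal_condExp_mul hm hY hY_nonneg hf.measurable.ennreal_ofReal,
    ← h_enorm _ (condExp_nonneg hY_nonneg)]
  exact h_int.2

end CondExp

theorem measure_exists_ge_le_of_martingale {Ω : Type*} {m0 : MeasurableSpace Ω}
    {μ : Measure Ω} [IsFiniteMeasure μ] {ℱ : Filtration ℕ m0} {f : ℕ → Ω → ℝ}
    (hf : Martingale f ℱ μ) (hf_nonneg : 0 ≤ f) {ε : ℝ} (hε : 0 < ε) (n : ℕ) :
    μ {ω | ∃ k ≤ n, ε ≤ f k ω} ≤ ENNReal.ofReal ((∫ ω, f 0 ω ∂μ) / ε) := by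
  have h_doob := maximal_ineq hf.submartingale hf_nonneg (ε := ε.toNNReal) n
  simp only [Real.coe_toNNReal _ hε.le, Finset.le_sup'_iff, Finset.mem_range,
    Nat.lt_succ_iff] at h_doob
  have h_int : ∫ ω in {ω | ∃ k ≤ n, ε ≤ f k ω}, f n ω ∂μ ≤ ∫ ω, f 0 ω ∂μ := by
    calc ∫ ω in {ω | ∃ k ≤ n, ε ≤ f k ω}, f n ω ∂μ
        ≤ ∫ ω, f n ω ∂μ := setIntegral_le_integral (hf.integrable n) (.of_forall (hf_nonneg n))
      _ = ∫ ω, f 0 ω ∂μ := by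
        simpa using (hf.setIntegral_eq (Nat.zero_le n) MeasurableSet.univ).symm
  rw [ENNReal.ofReal_div_of_pos hε, ENNReal.le_div_iff_mul_le (by simp [hε]) (by simp), mul_comm]
  exact h_doob.trans (ENNReal.ofReal_le_ofReal h_int)

theorem one_sub_measure_le_measure_compl {Ω : Type*} {m0 : MeasurableSpace Ω}
    {μ : Measure Ω} [IsProbabilityMeasure μ] (s : Set Ω) : 1 - μ s ≤ μ sᶜ := by
  rw [tsub_le_iff_left, ← measure_univ (μ := μ)]
  exact measure_univ_le_add_compl s

section ExpCompensatedSum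

open Real Finset

variable {Ω : Type*} {m0 : MeasurableSpace Ω} {μ : Measure Ω} {ℱ : Filtration ℕ m0}
  {X : ℕ → Ω → ℝ}

noncomputable def expCompensatedSum (μ : Measure Ω) (ℱ : Filtration ℕ m0) (X : ℕ → Ω → ℝ)
    (k : ℕ) (ω : Ω) : ℝ :=
  exp (∑ t ∈ Icc 1 k, (X t ω - log (μ[fun ω' => exp (X t ω') | ℱ (t - 1)] ω)))

theorem expCompensatedSum_zero : expCompensatedSum μ ℱ X 0 = 1 := by
  ext ω
  simp [expCompensatedSum]

theorem expCompensatedSum_pos (k : ℕ) (ω : Ω) : 0 < expCompensatedSum μ ℱ X k ω :=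
  exp_pos _

theorem expCompensatedSum_succ (k : ℕ) (ω : Ω) :
    expCompensatedSum μ ℱ X (k + 1) ω = expCompensatedSum μ ℱ X k ω
      * exp (-log (μ[fun ω' => exp (X (k + 1) ω') | ℱ k] ω)) * exp (X (k + 1) ω) := by
  rw [expCompensatedSum, sum_Icc_succ_top (by omega), exp_add, exp_sub, expCompensatedSum,
    exp_neg, Nat.add_sub_cancel]
  ring

theorem stronglyAdapted_expCompensatedSum (hX : ∀ t, 1 ≤ t → Measurable[ℱ t] (X t)) :
    StronglyAdapted ℱ (expCompensatedSum μ ℱ X) := fun k => by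
  refine (Measurable.exp (measurable_sum _ fun t ht => ?_)).stronglyMeasurable
  obtain ⟨ht1, htk⟩ := mem_Icc.1 ht
  exact ((hX t ht1).mono (ℱ.mono htk) le_rfl).sub
    (stronglyMeasurable_condExp.measurable.mono (ℱ.mono (by omega)) le_rfl).log

theorem integrable_expCompensatedSum_succ_and_ae_eq_condExp [IsFiniteMeasure μ]
    (hX : ∀ t, 1 ≤ t → Measurable[ℱ t] (X t))
    (hX_int : ∀ t, 1 ≤ t → Integrable (fun ω => exp (X t ω)) μ) {k : ℕ}
    (hk : Integrable (expCompensatedSum μ ℱ X k) μ) :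
    Integrable (expCompensatedSum μ ℱ X (k + 1)) μ ∧
      expCompensatedSum μ ℱ X k =ᵐ[μ] μ[expCompensatedSum μ ℱ X (k + 1) | ℱ k] := by
  set Y : Ω → ℝ := fun ω => exp (X (k + 1) ω)
  set f : Ω → ℝ := fun ω => expCompensatedSum μ ℱ X k ω * exp (-log (μ[Y | ℱ k] ω))
  have hY : Integrable Y μ := hX_int (k + 1) (by omega)
  have hf : StronglyMeasurable[ℱ k] f :=
    ((stronglyAdapted_expCompensatedSum hX k).measurable.mul
      stronglyMeasurable_condExp.measurable.log.neg.exp).stronglyMeasurable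
  have hfY : f * Y = expCompensatedSum μ ℱ X (k + 1) :=
    funext fun ω => (expCompensatedSum_succ k ω).symm
  have hf_condExp : f * μ[Y | ℱ k] =ᵐ[μ] expCompensatedSum μ ℱ X k := by
    filter_upwards [ae_pos_condExp_of_pos (ℱ.le k) hY fun ω => exp_pos _] with ω hω
    simp only [Pi.mul_apply, f, exp_neg, exp_log hω, mul_assoc, inv_mul_cancel₀ hω.ne', mul_one]
  have h_int : Integrable (f * Y) μ :=
    integrable_mul_of_integrable_mul_condExp (ℱ.le k) hf
      (fun ω => (mul_pos (expCompensatedSum_pos k ω) (exp_pos _)).le) hY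
      (.of_forall fun ω => (exp_pos _).le) (hk.congr hf_condExp.symm)
  refine ⟨hfY ▸ h_int, ?_⟩
  rw [← hfY]
  exact hf_condExp.symm.trans (condExp_mul_of_stronglyMeasurable_left hf h_int hY).symm

theorem martingale_expCompensatedSum [IsFiniteMeasure μ]
    (hX : ∀ t, 1 ≤ t → Measurable[ℱ t] (X t))
    (hX_int : ∀ t, 1 ≤ t → Integrable (fun ω => exp (X t ω)) μ) :
    Martingale (expCompensatedSum μ ℱ X) ℱ μ := by
  have h_int : ∀ k, Integrable (expCompensatedSum μ ℱ X k) μ := by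
    intro k
    induction k with
    | zero => rw [expCompensatedSum_zero]; exact integrable_const (1 : ℝ)
    | succ k ih => exact (integrable_expCompensatedSum_succ_and_ae_eq_condExp hX hX_int ih).1
  exact martingale_nat (stronglyAdapted_expCompensatedSum hX) h_int
    fun k => (integrable_expCompensatedSum_succ_and_ae_eq_condExp hX hX_int (h_int k)).2

theorem one_sub_le_measure_forall_sum_le_log_condExp [IsProbabilityMeasure μ]
    (hX : ∀ t, 1 ≤ t → Measurable[ℱ t] (X t))
    (hX_int : ∀ t, 1 ≤ t → Integrable (fun ω => exp (X t ω)) μ) {δ : ℝ} (hδ : 0 < δ) (n : ℕ) :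
    ENNReal.ofReal (1 - δ) ≤ μ {ω | ∀ k ≤ n, ∑ t ∈ Icc 1 k, X t ω ≤
      ∑ t ∈ Icc 1 k, log (μ[fun ω' => exp (X t ω') | ℱ (t - 1)] ω) + log (1 / δ)} := by
  have h_ville : μ {ω | ∃ k ≤ n, 1 / δ ≤ expCompensatedSum μ ℱ X k ω} ≤ ENNReal.ofReal δ := by
    simpa [expCompensatedSum_zero] using measure_exists_ge_le_of_martingale
      (martingale_expCompensatedSum hX hX_int) (fun k ω => (expCompensatedSum_pos k ω).le)
      (one_div_pos.2 hδ) n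
  calc ENNReal.ofReal (1 - δ)
      ≤ 1 - μ {ω | ∃ k ≤ n, 1 / δ ≤ expCompensatedSum μ ℱ X k ω} := by
        rw [ENNReal.ofReal_sub _ hδ.le, ENNReal.ofReal_one]
        exact tsub_le_tsub_left h_ville 1
    _ ≤ μ {ω | ∃ k ≤ n, 1 / δ ≤ expCompensatedSum μ ℱ X k ω}ᶜ :=
        one_sub_measure_le_measure_compl _
    _ ≤ _ := measure_mono fun ω hω => by
        intro k hk
        have h_lt := not_le.1 fun h => hω ⟨k, hk, h⟩
        rw [expCompensatedSum, ← lt_log_iff_exp_lt (one_div_pos.2 hδ), sum_sub_distrib] at h_lt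
        linarith

end ExpCompensatedSum

/-- time-uniform martingale Chernoff bound: with probability at
least `1 − δ`, simultaneously for all `1 ≤ T' ≤ T`,
`∑_{t=1}^{T'} X_t ≤ ∑_{t=1}^{T'} log E[e^{X_t} | 𝔉_{t−1}] + log(1/δ)`. -/
theorem time_uniform_martingale_chernoff {Ω : Type*} {m0 : MeasurableSpace Ω}
    (ℙ : Measure Ω) [IsProbabilityMeasure ℙ] (T : ℕ) (ℱ : Filtration ℕ m0)
    (X : ℕ → Ω → ℝ)
    (hX_meas : ∀ t, 1 ≤ t → t ≤ T → Measurable[ℱ t] (X t))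
    (hX_int : ∀ t, 1 ≤ t → t ≤ T → Integrable (fun ω => Real.exp (X t ω)) ℙ)
    (δ : ℝ) (hδ : δ ∈ Set.Ioo (0 : ℝ) 1) :
    ENNReal.ofReal (1 - δ) ≤
      ℙ {ω | ∀ T', 1 ≤ T' → T' ≤ T →
        (∑ t ∈ Finset.Icc 1 T', X t ω) ≤
          (∑ t ∈ Finset.Icc 1 T',
              Real.log ((ℙ[(fun ω' => Real.exp (X t ω')) | ℱ (t - 1)]) ω)) +
            Real.log (1 / δ)} := by
  -- extended by `0` after `T`, the sequence satisfies the hypotheses at all times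
  set X' : ℕ → Ω → ℝ := fun t => if t ≤ T then X t else 0
  refine (one_sub_le_measure_forall_sum_le_log_condExp (ℱ := ℱ) (X := X') (fun t ht => ?_)
    (fun t ht => ?_) hδ.1 T).trans (measure_mono fun ω hω => ?_)
  · by_cases htT : t ≤ T <;> simp [X', htT, hX_meas t ht, measurable_zero]
  · by_cases htT : t ≤ T <;> simp [X', htT, hX_int t ht]
  · intro T' _ hT'
    have h_eq : ∀ t ∈ Finset.Icc 1 T', X' t = X t :=
      fun t ht => if_pos ((Finset.mem_Icc.1 ht).2.trans hT')
    have h := hω T' hT'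
    rwa [Finset.sum_congr rfl fun t ht => congrFun (h_eq t ht) ω,
      Finset.sum_congr rfl fun t ht =>
        congrArg (fun Y => Real.log (ℙ[fun ω' => Real.exp (Y ω') | ℱ (t - 1)] ω)) (h_eq t ht)]
      at h
end
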